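/- Let f be a formal Fourier series with \hat{f}(k) ≥ 0 for all |k| ≤ n. Then the norms of the truncated branching-Toeplitz matrix and the standard Toeplitz matrix coincide: ‖Γ_q^{(n)}[f]‖ = ‖T_n(f)‖, where T_n(f) = [\hat{f}(k-l)]_{0≤k,l≤n}. -/

import Mathlib

/-- Vertices of the rooted `q`-homogeneous tree, modelled as words over `Fin q`;
the root is the empty word and the children of `w` are the words `k :: w`. -/
abbrev Vertex (q : ℕ) := List (Fin q)

/-- `σ` is an ancestor of `τ` (i.e. `σ ⪯ τ`): `τ = w ++ σ` for some word `w`. -/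
def Anc {q : ℕ} (σ τ : Vertex q) : Prop := σ <:+ τ

/-- Two vertices are comparable (`(σ,τ) ∈ 𝒞`) if one is an ancestor of the other. -/
def Comp {q : ℕ} (σ τ : Vertex q) : Prop := σ <:+ τ ∨ τ <:+ σ

/-- Length of the longest common suffix, i.e. the generation of the last common
ancestor of the two vertices. -/
def lcs {q : ℕ} (σ τ : Vertex q) : ℕ :=
  ((σ.reverse.zip τ.reverse).takeWhile (fun p => decide (p.1 = p.2))).length

/-- The graph distance on the rooted `q`-homogeneous tree. -/
def tdist {q : ℕ} (σ τ : Vertex q) : ℕ := (σ.length - lcs σ τ) + (τ.length - lcs σ τ)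

instance {q : ℕ} (σ τ : Vertex q) : Decidable (Comp σ τ) :=
  inferInstanceAs (Decidable (σ <:+ τ ∨ τ <:+ σ))

/-- The branching-Toeplitz kernel
`Γ_q[f](σ₁,σ₂) = q^{-d(σ₁,σ₂)/2} · f̂(|σ₁|-|σ₂|) · 1_𝒞(σ₁,σ₂)` associated with a
formal Fourier series with coefficients `f̂ : ℤ → ℂ`. -/
noncomputable def btKer {q : ℕ} (f : ℤ → ℂ) (σ₁ σ₂ : Vertex q) : ℂ :=
  if Comp σ₁ σ₂ then
    ((q : ℝ) ^ (-(tdist σ₁ σ₂ : ℝ) / 2) : ℝ) * f ((σ₁.length : ℤ) - σ₂.length) else 0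

/-- The ball `B_n(T_q)` of vertices of generation at most `n`. -/
abbrev Ball (q n : ℕ) := {σ : Vertex q // σ.length ≤ n}

noncomputable instance (q n : ℕ) : Fintype (Ball q n) :=
  (List.finite_length_le (Fin q) n).fintype

/-- The truncated branching-Toeplitz matrix `Γ_q^{(n)}[f]` on `B_n(T_q)`. -/
noncomputable def btMat (q n : ℕ) (f : ℤ → ℂ) : Matrix (Ball q n) (Ball q n) ℂ :=
  fun σ₁ σ₂ => btKer f σ₁.1 σ₂.1

/-- The standard Toeplitz matrix `T_n(f) = [f̂(k-l)]_{0 ≤ k,l ≤ n}`. -/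
def toepMat (n : ℕ) (f : ℤ → ℂ) : Matrix (Fin (n + 1)) (Fin (n + 1)) ℂ :=
  fun k l => f ((k : ℤ) - (l : ℤ))

open scoped ComplexOrder

/-!
Let `U` be the matrix whose `k`-th column is `q^{-k/2} 1_{|σ| = k}`, the normalised indicator of
the sphere of radius `k` (which has `q^k` vertices). Summing the kernel over a sphere shows
`Γ U = U T` and `Γᴴ U = U Tᴴ`, so `U` is an isometry onto the radial subspace, `T = Uᴴ Γ U`, and the
orthogonal projection `P = U Uᴴ` commutes with `Γ`; hence `‖T‖ ≤ ‖Γ‖` and `‖Γ P‖ ≤ ‖T‖`.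

For the reverse inequality, split a norming vector `x` of `Γ` as `P x + (1 - P) x`: Pythagoras for
`x` and for `Γ x` gives `(‖Γ‖² - ‖Γ P‖²) ‖P x‖² ≤ 0`, so it suffices that `P x ≠ 0`. Because `Γ` has
nonnegative entries, the entrywise modulus of a norming vector is again norming, and `P`, having
nonnegative entries and positive diagonal, does not annihilate a nonzero nonnegative vector.
-/

theorem ContinuousLinearMap.exists_norm_le_one_norm_apply_eq_opNorm {𝕜 E F : Type*} [RCLike 𝕜]
    [NormedAddCommGroup E] [NormedSpace 𝕜 E] [FiniteDimensional 𝕜 E] [NormedAddCommGroup F]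
    [NormedSpace 𝕜 F] (a : E →L[𝕜] F) : ∃ x, ‖x‖ ≤ 1 ∧ ‖a x‖ = ‖a‖ := by
  have := FiniteDimensional.proper_rclike 𝕜 E
  obtain ⟨x, hx, h⟩ := ((isCompact_closedBall (0 : E) 1).image (by fun_prop)).sSup_mem
    ((Metric.nonempty_closedBall.2 zero_le_one).image fun x => ‖a x‖)
  exact ⟨x, mem_closedBall_zero_iff.1 hx, h.trans a.sSup_unitClosedBall_eq_norm⟩

namespace IsStarProjection

variable {𝕜 E : Type*} [RCLike 𝕜] [NormedAddCommGroup E] [InnerProductSpace 𝕜 E] [CompleteSpace E]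
  {p : E →L[𝕜] E}

theorem apply_apply (hp : IsStarProjection p) (x : E) : p (p x) = p x :=
  DFunLike.congr_fun hp.isIdempotentElem.eq x

theorem norm_sq_eq_add (hp : IsStarProjection p) (x : E) :
    ‖x‖ ^ 2 = ‖p x‖ ^ 2 + ‖x - p x‖ ^ 2 := by
  have horth : inner 𝕜 (p x) (x - p x) = 0 := by
    rw [show inner 𝕜 (p x) (x - p x) = inner 𝕜 x (p (x - p x)) from
      hp.isSelfAdjoint.isSymmetric _ _, map_sub, hp.apply_apply, sub_self, inner_zero_right]
  simpa [sq] using norm_add_sq_eq_norm_sq_add_norm_sq_of_inner_eq_zero _ _ horth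

theorem opNorm_le_opNorm_mul_of_commute {a : E →L[𝕜] E} (hp : IsStarProjection p)
    (hap : Commute a p) {x : E} (hx : ‖a‖ * ‖x‖ ≤ ‖a x‖) (hpx : p x ≠ 0) : ‖a‖ ≤ ‖a * p‖ := by
  have hpa (y : E) : p (a y) = a (p y) := DFunLike.congr_fun hap.eq.symm y
  have hsplit : ‖a x‖ ^ 2 = ‖(a * p) (p x)‖ ^ 2 + ‖a (x - p x)‖ ^ 2 := by
    rw [hp.norm_sq_eq_add (a x), hpa, ← map_sub]
    show _ = ‖a (p (p x))‖ ^ 2 + _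
    rw [hp.apply_apply]
  have h1 := (a * p).le_opNorm (p x)
  have h2 := a.le_opNorm (x - p x)
  have hx2 := hp.norm_sq_eq_add x
  have hsq : ‖a‖ ^ 2 * ‖p x‖ ^ 2 ≤ ‖a * p‖ ^ 2 * ‖p x‖ ^ 2 := by
    nlinarith [mul_le_mul h1 h1 (norm_nonneg _) (by positivity),
      mul_le_mul h2 h2 (norm_nonneg _) (by positivity),
      mul_le_mul hx hx (by positivity) (norm_nonneg _)]
  exact (pow_le_pow_iff_left₀ (norm_nonneg _) (norm_nonneg _) two_ne_zero).1
    (le_of_mul_le_mul_right hsq (by positivity))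

end IsStarProjection

namespace Matrix

section Isometry

open scoped Matrix.Norms.L2Operator

variable {𝕜 l m k : Type*} [RCLike 𝕜] [Fintype l] [Fintype m] [Fintype k] [DecidableEq k]

theorem l2_opNorm_le_one_of_conjTranspose_mul_self_eq_one {U : Matrix m k 𝕜} (hU : Uᴴ * U = 1) :
    ‖U‖ ≤ 1 := by
  have h1 : ‖(1 : Matrix k k 𝕜)‖ ≤ 1 := by
    rw [cstar_norm_def, map_one]
    exact ContinuousLinearMap.norm_id_le
  have := l2_opNorm_conjTranspose_mul_self U
  rw [hU] at this
  nlinarith [norm_nonneg U]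

theorem l2_opNorm_mul_mul_le_of_le_one [DecidableEq l] [DecidableEq m] {U : Matrix l m 𝕜}
    {V : Matrix k l 𝕜} (hU : ‖U‖ ≤ 1) (hV : ‖V‖ ≤ 1) (M : Matrix m k 𝕜) : ‖U * M * V‖ ≤ ‖M‖ :=
  calc ‖U * M * V‖ ≤ ‖U‖ * ‖M‖ * ‖V‖ :=
        (l2_opNorm_mul _ _).trans (mul_le_mul_of_nonneg_right (l2_opNorm_mul _ _) (norm_nonneg _))
    _ ≤ 1 * ‖M‖ * 1 := by gcongr
    _ = ‖M‖ := by ring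

end Isometry

section StarRing

variable {α m k : Type*} [CommSemiring α] [StarRing α] [Fintype m] [Fintype k] {U : Matrix m k α}

theorem isStarProjection_mul_conjTranspose [DecidableEq k] (hU : Uᴴ * U = 1) :
    IsStarProjection (U * Uᴴ) where
  isIdempotentElem := by
    rw [IsIdempotentElem, Matrix.mul_assoc, ← Matrix.mul_assoc Uᴴ, hU, Matrix.one_mul]
  isSelfAdjoint := by
    rw [IsSelfAdjoint, star_eq_conjTranspose, conjTranspose_mul, conjTranspose_conjTranspose]

theorem commute_mul_conjTranspose [DecidableEq m] {A : Matrix m m α} {T : Matrix k k α}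
    (hAU : A * U = U * T) (hAU' : Aᴴ * U = U * Tᴴ) : Commute A (U * Uᴴ) := by
  have hUA : Uᴴ * A = T * Uᴴ := by
    simpa only [conjTranspose_mul, conjTranspose_conjTranspose] using congrArg conjTranspose hAU'
  rw [Commute, SemiconjBy, ← Matrix.mul_assoc, hAU, Matrix.mul_assoc, Matrix.mul_assoc, hUA]

end StarRing

section Nonneg

variable {ι m k : Type*} [Fintype ι] [Fintype k]

theorem mul_conjTranspose_nonneg {U : Matrix m k ℂ} (hU : ∀ i j, 0 ≤ U i j) (i i' : m) :
    0 ≤ (U * Uᴴ) i i' :=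
  Finset.sum_nonneg fun j _ => mul_nonneg (hU i j) (star_nonneg_iff.2 (hU i' j))

theorem mul_conjTranspose_apply_self_pos {U : Matrix m k ℂ} (hU : ∀ i j, 0 ≤ U i j) {i : m}
    {j : k} (hij : 0 < U i j) : 0 < (U * Uᴴ) i i :=
  calc 0 < U i j * star (U i j) := mul_pos hij (star_pos_iff.2 hij)
    _ ≤ ∑ j', U i j' * star (U i j') :=
        Finset.single_le_sum (f := fun j' => U i j' * star (U i j'))
          (fun j' _ => mul_nonneg (hU i j') (star_nonneg_iff.2 (hU i j'))) (Finset.mem_univ j)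

theorem mulVec_ne_zero_of_nonneg {P : Matrix ι ι ℂ} (hP : ∀ i j, 0 ≤ P i j)
    (hP_diag : ∀ i, 0 < P i i) {y : ι → ℂ} (hy : ∀ i, 0 ≤ y i) (hy0 : y ≠ 0) : P *ᵥ y ≠ 0 := by
  obtain ⟨i, hi⟩ := Function.ne_iff.1 hy0
  have hyi : 0 < y i := lt_of_le_of_ne (hy i) (Ne.symm hi)
  refine Function.ne_iff.2 ⟨i, ne_of_gt ?_⟩
  calc (0 : ℂ) < P i i * y i := mul_pos (hP_diag i) hyi
    _ ≤ ∑ j, P i j * y j := Finset.single_le_sum (f := fun j => P i j * y j)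
          (fun j _ => mul_nonneg (hP i j) (hy j)) (Finset.mem_univ i)

end Nonneg

end Matrix

namespace EuclideanSpace

variable {ι : Type*}

noncomputable def entrywiseNorm (x : EuclideanSpace ℂ ι) : EuclideanSpace ℂ ι :=
  WithLp.toLp 2 fun i => (‖x i‖ : ℂ)

@[simp]
theorem entrywiseNorm_apply (x : EuclideanSpace ℂ ι) (i : ι) : x.entrywiseNorm i = ‖x i‖ := rfl

theorem entrywiseNorm_nonneg (x : EuclideanSpace ℂ ι) (i : ι) : 0 ≤ x.entrywiseNorm i := by
  simp

variable [Fintype ι]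

theorem norm_entrywiseNorm (x : EuclideanSpace ℂ ι) : ‖x.entrywiseNorm‖ = ‖x‖ := by
  simp [EuclideanSpace.norm_eq]

theorem entrywiseNorm_ne_zero {x : EuclideanSpace ℂ ι} (hx : x ≠ 0) : x.entrywiseNorm ≠ 0 := by
  rwa [← norm_ne_zero_iff, norm_entrywiseNorm, norm_ne_zero_iff]

theorem norm_le_norm_of_forall_norm_le {x y : EuclideanSpace ℂ ι} (h : ∀ i, ‖x i‖ ≤ ‖y i‖) :
    ‖x‖ ≤ ‖y‖ := by
  rw [EuclideanSpace.norm_eq, EuclideanSpace.norm_eq]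
  gcongr with i
  exact h i

end EuclideanSpace

namespace Matrix

variable {ι : Type*} [Fintype ι] [DecidableEq ι]

theorem norm_toEuclideanCLM_apply_le_entrywiseNorm {A : Matrix ι ι ℂ} (hA : ∀ i j, 0 ≤ A i j)
    (x : EuclideanSpace ℂ ι) :
    ‖toEuclideanCLM (𝕜 := ℂ) A x‖ ≤ ‖toEuclideanCLM (𝕜 := ℂ) A x.entrywiseNorm‖ := by
  refine EuclideanSpace.norm_le_norm_of_forall_norm_le fun i => ?_
  have hterm (j : ι) : 0 ≤ A i j * x.entrywiseNorm j :=
    mul_nonneg (hA i j) (x.entrywiseNorm_nonneg j)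
  simp only [ofLp_toEuclideanCLM, mulVec, dotProduct]
  calc ‖∑ j, A i j * x j‖ ≤ ∑ j, ‖A i j * x.entrywiseNorm j‖ := by
        refine (norm_sum_le _ _).trans_eq (Finset.sum_congr rfl fun j _ => ?_)
        simp
    _ = ‖∑ j, A i j * x.entrywiseNorm j‖ := by
        refine Complex.ofReal_injective ?_
        push_cast
        rw [Complex.norm_of_nonneg' (Finset.sum_nonneg fun j _ => hterm j)]
        exact Finset.sum_congr rfl fun j _ => Complex.norm_of_nonneg' (hterm j)

open scoped Matrix.Norms.L2Operator in
theorem l2_opNorm_le_l2_opNorm_mul_of_commute {A P : Matrix ι ι ℂ} (hA : ∀ i j, 0 ≤ A i j)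
    (hP : IsStarProjection P) (hP_nonneg : ∀ i j, 0 ≤ P i j) (hP_diag : ∀ i, 0 < P i i)
    (hAP : Commute A P) : ‖A‖ ≤ ‖A * P‖ := by
  set a := toEuclideanCLM (𝕜 := ℂ) A
  obtain ⟨x, hx1, hxa⟩ := a.exists_norm_le_one_norm_apply_eq_opNorm
  rcases eq_or_ne x 0 with rfl | hx0
  · rw [cstar_norm_def, ← hxa, map_zero, norm_zero]
    exact norm_nonneg _
  rw [cstar_norm_def, cstar_norm_def, map_mul]
  refine (hP.map toEuclideanCLM).opNorm_le_opNorm_mul_of_commute (hAP.map toEuclideanCLM)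
    (x := x.entrywiseNorm) ?_ fun h => ?_
  · calc ‖a‖ * ‖x.entrywiseNorm‖ ≤ ‖a‖ := by
          rw [EuclideanSpace.norm_entrywiseNorm]
          exact mul_le_of_le_one_right (norm_nonneg _) hx1
      _ = ‖a x‖ := hxa.symm
      _ ≤ ‖a x.entrywiseNorm‖ := norm_toEuclideanCLM_apply_le_entrywiseNorm hA x
  · refine mulVec_ne_zero_of_nonneg hP_nonneg hP_diag x.entrywiseNorm_nonneg ?_
      (congrArg WithLp.ofLp h)
    exact fun h0 => EuclideanSpace.entrywiseNorm_ne_zero hx0 (congrArg (WithLp.toLp 2) h0)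

end Matrix

section TakeWhileZip

variable {α : Type*} [DecidableEq α]

theorem List.length_takeWhile_zip_comm (a b : List α) :
    ((a.zip b).takeWhile fun p => decide (p.1 = p.2)).length =
      ((b.zip a).takeWhile fun p => decide (p.1 = p.2)).length := by
  induction a generalizing b with
  | nil => simp
  | cons x a ih =>
    cases b with
    | nil => simp
    | cons y b =>
      by_cases hxy : x = y
      · subst hxy
        simpa using ih b
      · simp [hxy, Ne.symm hxy]

theorem List.length_takeWhile_zip_append (a c : List α) :
    ((a.zip (a ++ c)).takeWhile fun p => decide (p.1 = p.2)).length = a.length := by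
  induction a with
  | nil => simp
  | cons x a ih => simpa using ih

end TakeWhileZip

open Finset Matrix

section Tree

variable {q n : ℕ}

theorem lcs_comm (σ τ : Vertex q) : lcs σ τ = lcs τ σ :=
  List.length_takeWhile_zip_comm _ _

theorem tdist_comm (σ τ : Vertex q) : tdist σ τ = tdist τ σ := by
  unfold tdist
  rw [lcs_comm]
  omega

theorem lcs_eq_length_of_suffix {σ τ : Vertex q} (h : σ <:+ τ) : lcs σ τ = σ.length := by
  obtain ⟨w, rfl⟩ := h
  simpa [lcs] using List.length_takeWhile_zip_append σ.reverse w.reverse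

theorem tdist_eq_of_suffix {σ τ : Vertex q} (h : σ <:+ τ) : tdist σ τ = τ.length - σ.length := by
  have := h.length_le
  unfold tdist
  rw [lcs_eq_length_of_suffix h]
  omega

theorem comp_and_length_eq_iff_of_le {σ τ : Vertex q} {l : ℕ} (hl : l ≤ σ.length) :
    Comp σ τ ∧ τ.length = l ↔ τ.length = l ∧ τ <:+ σ := by
  constructor
  · rintro ⟨h | h, hlen⟩
    · exact ⟨hlen, h.eq_of_length_le (by omega) ▸ List.suffix_refl _⟩
    · exact ⟨hlen, h⟩
  · rintro ⟨hlen, h⟩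
    exact ⟨Or.inr h, hlen⟩

theorem comp_and_length_eq_iff_of_lt {σ τ : Vertex q} {l : ℕ} (hl : σ.length < l) :
    Comp σ τ ∧ τ.length = l ↔ τ.length = l ∧ σ <:+ τ := by
  constructor
  · rintro ⟨h | h, hlen⟩
    · exact ⟨hlen, h⟩
    · exact absurd h.length_le (by omega)
  · rintro ⟨hlen, h⟩
    exact ⟨Or.inl h, hlen⟩

theorem card_filter_length_eq_suffix (v : Vertex q) {L : ℕ} (hL : L ≤ n) (hv : v.length ≤ L) :
    #{τ : Ball q n | τ.1.length = L ∧ v <:+ τ.1} = q ^ (L - v.length) := by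
  rw [show q ^ (L - v.length) = Fintype.card (List.Vector (Fin q) (L - v.length)) by simp,
    ← card_univ]
  refine (card_bij (fun w _ => ⟨w.1 ++ v, by simp [w.2]; omega⟩) ?_ ?_ ?_).symm
  · intro w _
    simp only [mem_filter, mem_univ, true_and, List.length_append, w.2]
    exact ⟨by omega, List.suffix_append _ _⟩
  · intro w₁ _ w₂ _ h
    exact Subtype.ext (List.append_cancel_right (congrArg Subtype.val h))
  · intro τ hτ
    simp only [mem_filter, mem_univ, true_and] at hτ
    obtain ⟨hlen, w, hw⟩ := hτ
    have hwl : w.length = L - v.length := by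
      have := congrArg List.length hw
      simp only [List.length_append] at this
      omega
    exact ⟨⟨w, hwl⟩, mem_univ _, Subtype.ext hw⟩

theorem filter_length_eq_suffix_eq_singleton (σ : Ball q n) {L : ℕ} (hL : L ≤ σ.1.length) :
    ({τ : Ball q n | τ.1.length = L ∧ τ.1 <:+ σ.1} : Finset (Ball q n)) =
      {⟨σ.1.drop (σ.1.length - L), by simp; omega⟩} := by
  ext τ
  simp only [mem_filter, mem_univ, true_and, mem_singleton, Subtype.ext_iff]
  constructor
  · rintro ⟨hlen, hsuf⟩
    rw [List.suffix_iff_eq_drop.1 hsuf, hlen]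
  · rintro h
    rw [h]
    exact ⟨by simp; omega, List.drop_suffix _ _⟩

/-- Below `σ` the unique comparable vertex of generation `l` is at distance `|σ| - l`; above `σ`
there are `q^{l - |σ|}` of them, each at distance `l - |σ|`. -/
theorem sum_filter_comp_length_eq (hq : 0 < q) (σ : Ball q n) {l : ℕ} (hl : l ≤ n) :
    ∑ τ : Ball q n with Comp σ.1 τ.1 ∧ τ.1.length = l,
      (q : ℝ) ^ (-(tdist σ.1 τ.1 : ℝ) / 2) * (q : ℝ) ^ (-(l : ℝ) / 2) =
    (q : ℝ) ^ (-(σ.1.length : ℝ) / 2) := by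
  have hq' : (0 : ℝ) < q := by exact_mod_cast hq
  rcases le_or_gt l σ.1.length with hlσ | hσl
  · rw [filter_congr fun τ _ => comp_and_length_eq_iff_of_le hlσ,
      filter_length_eq_suffix_eq_singleton σ hlσ, sum_singleton, tdist_comm,
      tdist_eq_of_suffix (List.drop_suffix _ _), List.length_drop, ← Real.rpow_add hq',
      Nat.sub_sub_self hlσ]
    push_cast [hlσ]
    ring_nf
  · rw [filter_congr fun τ _ => comp_and_length_eq_iff_of_lt hσl,
      sum_congr rfl (g := fun _ => (q : ℝ) ^ (-((l - σ.1.length : ℕ) : ℝ) / 2) *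
        (q : ℝ) ^ (-(l : ℝ) / 2)) ?_, sum_const, card_filter_length_eq_suffix σ.1 hl hσl.le,
      nsmul_eq_mul, Nat.cast_pow, ← Real.rpow_natCast, ← Real.rpow_add hq', ← Real.rpow_add hq']
    · push_cast [hσl.le]
      ring_nf
    · intro τ hτ
      rw [tdist_eq_of_suffix (mem_filter.1 hτ).2.2, (mem_filter.1 hτ).2.1]

theorem btMat_nonneg {f : ℤ → ℂ} (hf : ∀ k : ℤ, |k| ≤ (n : ℤ) → 0 ≤ f k) (σ τ : Ball q n) :
    0 ≤ btMat q n f σ τ := by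
  unfold btMat btKer
  split_ifs
  · refine mul_nonneg (Complex.zero_le_real.2 (by positivity)) (hf _ ?_)
    have := σ.2
    have := τ.2
    rw [abs_le]
    omega
  · exact le_rfl

theorem btMat_conjTranspose (f : ℤ → ℂ) :
    (btMat q n f)ᴴ = btMat q n fun k => star (f (-k)) := by
  ext σ τ
  simp only [conjTranspose_apply, btMat, btKer, Comp, or_comm (a := σ.1 <:+ τ.1), tdist_comm σ.1,
    neg_sub]
  by_cases h : τ.1 <:+ σ.1 ∨ σ.1 <:+ τ.1 <;> simp [h, mul_comm]

theorem toepMat_conjTranspose (f : ℤ → ℂ) :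
    (toepMat n f)ᴴ = toepMat n fun k => star (f (-k)) := by
  ext k l
  simp [toepMat]

/-- The columns form an orthonormal basis of the radial subspace `ℂ_rad^{B_n(T_q)}`. -/
noncomputable def radialMat (q n : ℕ) : Matrix (Ball q n) (Fin (n + 1)) ℂ :=
  fun σ k => if σ.1.length = k then (((q : ℝ) ^ (-(k : ℝ) / 2) : ℝ) : ℂ) else 0

theorem radialMat_nonneg (σ : Ball q n) (k : Fin (n + 1)) : 0 ≤ radialMat q n σ k := by
  unfold radialMat
  split_ifs
  · exact Complex.zero_le_real.2 (by positivity)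
  · exact le_rfl

theorem radialMat_apply_length_pos (hq : 0 < q) (σ : Ball q n) :
    0 < radialMat q n σ ⟨σ.1.length, Nat.lt_succ_of_le σ.2⟩ := by
  simp only [radialMat, if_pos]
  exact Complex.zero_lt_real.2 (by positivity)

theorem radialMat_mul_apply {k : Type*} (M : Matrix (Fin (n + 1)) k ℂ) (σ : Ball q n) (l : k) :
    (radialMat q n * M) σ l =
      (((q : ℝ) ^ (-(σ.1.length : ℝ) / 2) : ℝ) : ℂ) * M ⟨σ.1.length, Nat.lt_succ_of_le σ.2⟩ l := by
  rw [mul_apply, sum_eq_single ⟨σ.1.length, Nat.lt_succ_of_le σ.2⟩]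
  · simp [radialMat]
  · intro k _ hk
    rw [radialMat, if_neg fun h => hk (Fin.ext h.symm), zero_mul]
  · simp

theorem conjTranspose_radialMat_mul_self (hq : 0 < q) :
    (radialMat q n)ᴴ * radialMat q n = 1 := by
  ext k l
  have hterm (σ : Ball q n) : (radialMat q n)ᴴ k σ * radialMat q n σ l =
      if σ.1.length = k ∧ k = l then
        (((q : ℝ) ^ (-(k : ℝ) / 2) * (q : ℝ) ^ (-(k : ℝ) / 2) : ℝ) : ℂ) else 0 := by
    simp only [conjTranspose_apply, radialMat]
    split_ifs <;> simp_all [Fin.ext_iff]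
  rw [mul_apply, sum_congr rfl fun σ _ => hterm σ, ← sum_filter, sum_const, one_apply]
  split_ifs with hkl
  · have hcard : #{σ : Ball q n | σ.1.length = k ∧ k = l} = q ^ (k : ℕ) := by
      simpa [hkl] using card_filter_length_eq_suffix (q := q) [] (Nat.lt_succ_iff.1 k.2) (by simp)
    have hq' : (0 : ℝ) < q := by exact_mod_cast hq
    rw [hcard, nsmul_eq_mul, ← Complex.ofReal_natCast, ← Complex.ofReal_mul, Nat.cast_pow,
      ← Real.rpow_natCast, ← Real.rpow_add hq', ← Real.rpow_add hq']
    ring_nf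
    simp
  · simp [hkl]

theorem btMat_mul_radialMat (hq : 0 < q) (f : ℤ → ℂ) :
    btMat q n f * radialMat q n = radialMat q n * toepMat n f := by
  ext σ l
  have hterm (τ : Ball q n) : btMat q n f σ τ * radialMat q n τ l =
      if Comp σ.1 τ.1 ∧ τ.1.length = l then
        ((((q : ℝ) ^ (-(tdist σ.1 τ.1 : ℝ) / 2) * (q : ℝ) ^ (-(l : ℝ) / 2) : ℝ) : ℂ) *
          f ((σ.1.length : ℤ) - l))
      else 0 := by
    simp only [btMat, btKer, radialMat]
    split_ifs <;> simp_all [mul_comm, mul_left_comm]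
  rw [radialMat_mul_apply, mul_apply, sum_congr rfl fun τ _ => hterm τ, ← sum_filter, ← sum_mul,
    ← Complex.ofReal_sum, sum_filter_comp_length_eq hq σ l.is_le]
  rfl

end Tree

open scoped Matrix.Norms.L2Operator in
theorem btMat_norm_eq_toepMat_norm_of_nonneg_general (q n : ℕ) (hq : 2 ≤ q)
    (f : ℤ → ℂ) (hf : ∀ k : ℤ, |k| ≤ (n : ℤ) → 0 ≤ f k) :
    ‖Matrix.toEuclideanCLM (𝕜 := ℂ) (btMat q n f)‖ =
      ‖Matrix.toEuclideanCLM (𝕜 := ℂ) (toepMat n f)‖ := by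
  have hq0 : 0 < q := by omega
  set A := btMat q n f
  set T := toepMat n f
  set U := radialMat q n
  have hUU : Uᴴ * U = 1 := conjTranspose_radialMat_mul_self hq0
  have hAU : A * U = U * T := btMat_mul_radialMat hq0 f
  have hAU' : Aᴴ * U = U * Tᴴ := by
    rw [btMat_conjTranspose, toepMat_conjTranspose]
    exact btMat_mul_radialMat hq0 _
  have hU : ‖U‖ ≤ 1 := l2_opNorm_le_one_of_conjTranspose_mul_self_eq_one hUU
  have hUH : ‖Uᴴ‖ ≤ 1 := by rwa [l2_opNorm_conjTranspose]
  rw [← cstar_norm_def, ← cstar_norm_def]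
  apply le_antisymm
  · calc ‖A‖ ≤ ‖A * (U * Uᴴ)‖ :=
          l2_opNorm_le_l2_opNorm_mul_of_commute (btMat_nonneg hf)
            (isStarProjection_mul_conjTranspose hUU) (mul_conjTranspose_nonneg radialMat_nonneg)
            (fun σ => mul_conjTranspose_apply_self_pos radialMat_nonneg
              (radialMat_apply_length_pos hq0 σ))
            (commute_mul_conjTranspose hAU hAU')
      _ = ‖U * T * Uᴴ‖ := by rw [← Matrix.mul_assoc, hAU]
      _ ≤ ‖T‖ := l2_opNorm_mul_mul_le_of_le_one hU hUH T
  · calc ‖T‖ = ‖Uᴴ * A * U‖ := by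
          rw [Matrix.mul_assoc, hAU, ← Matrix.mul_assoc, hUU, Matrix.one_mul]
      _ ≤ ‖A‖ := l2_opNorm_mul_mul_le_of_le_one hUH hU A

/-- If `f̂(k) ≥ 0` for all `|k| ≤ n`, then the ℓ²-operator norms
of the truncated branching-Toeplitz matrix `Γ_q^{(n)}[f]` and of the standard
Toeplitz matrix `T_n(f) = [f̂(k-l)]` coincide. -/
theorem btMat_norm_eq_toepMat_norm_of_nonneg (q n : ℕ) (hq : 2 ≤ q) (hn : 1 ≤ n)
    (f : ℤ → ℂ) (hf : ∀ k : ℤ, |k| ≤ (n : ℤ) → 0 ≤ f k) :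
    ‖Matrix.toEuclideanCLM (𝕜 := ℂ) (btMat q n f)‖ =
      ‖Matrix.toEuclideanCLM (𝕜 := ℂ) (toepMat n f)‖ :=
  btMat_norm_eq_toepMat_norm_of_nonneg_general q n hq f hf
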